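/- Let C ⊆ ℝⁿ be a convex set, x⁰ ∈ C and u ∈ T(C; x⁰). Then T²(C; x⁰, u) ⊆ cl cone(cone(C − x⁰) − u), where for S ⊆ ℝⁿ, cone S := {β s : β ≥ 0, s ∈ S} and cl denotes topological closure. -/

import Mathlib

open Filter Topology Set
open scoped InnerProductSpace

noncomputable section

/-- The (first-order) tangent cone `T(C; x⁰)`. -/
def tcone {n : ℕ} (C : Set (EuclideanSpace ℝ (Fin n)))
    (x0 : EuclideanSpace ℝ (Fin n)) : Set (EuclideanSpace ℝ (Fin n)) :=
  {d | ∃ t : ℕ → ℝ, ∃ dk : ℕ → EuclideanSpace ℝ (Fin n),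
    (∀ k, 0 < t k) ∧ Tendsto t atTop (𝓝 0) ∧ Tendsto dk atTop (𝓝 d) ∧
    ∀ k, x0 + t k • dk k ∈ C}

/-- The second-order tangent set `T²(C; x⁰, u)`. -/
def tcone2 {n : ℕ} (C : Set (EuclideanSpace ℝ (Fin n)))
    (x0 u : EuclideanSpace ℝ (Fin n)) : Set (EuclideanSpace ℝ (Fin n)) :=
  {v | ∃ t : ℕ → ℝ, ∃ vk : ℕ → EuclideanSpace ℝ (Fin n),
    (∀ k, 0 < t k) ∧ Tendsto t atTop (𝓝 0) ∧ Tendsto vk atTop (𝓝 v) ∧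
    ∀ k, x0 + t k • u + ((1 / 2) * (t k) ^ 2) • vk k ∈ C}

/-- The conic hull `cone S = {β s : β ≥ 0, s ∈ S}`. -/
def coneOf {n : ℕ} (S : Set (EuclideanSpace ℝ (Fin n))) :
    Set (EuclideanSpace ℝ (Fin n)) :=
  {x | ∃ β : ℝ, 0 ≤ β ∧ ∃ s ∈ S, x = β • s}

/-! If `c = x⁰ + t u + ½ t² v ∈ C` with `t > 0`, then `v = (2/t) ((1/t) (c − x⁰) − u)` lies in
`cone(cone(C − x⁰) − u)`; a second-order tangent vector is a limit of such `v`. -/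

theorem smul_mem_coneOf {n : ℕ} {S : Set (EuclideanSpace ℝ (Fin n))} {β : ℝ}
    {s : EuclideanSpace ℝ (Fin n)} (hβ : 0 ≤ β) (hs : s ∈ S) : β • s ∈ coneOf S :=
  ⟨β, hβ, s, hs, rfl⟩

theorem mem_coneOf_of_add_smul_add_sq_smul_mem {n : ℕ} {C : Set (EuclideanSpace ℝ (Fin n))}
    {x0 u v : EuclideanSpace ℝ (Fin n)} {t : ℝ} (ht : 0 < t)
    (hc : x0 + t • u + ((1 / 2) * t ^ 2) • v ∈ C) :
    v ∈ coneOf ((fun y => y - u) '' coneOf ((fun c => c - x0) '' C)) := by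
  set c := x0 + t • u + ((1 / 2) * t ^ 2) • v
  have hv : v = (2 / t) • ((1 / t) • (c - x0) - u) := by
    simp only [c]
    match_scalars <;> field_simp <;> ring
  rw [hv]
  exact smul_mem_coneOf (by positivity)
    ⟨_, smul_mem_coneOf (by positivity) ⟨c, hc, rfl⟩, rfl⟩

theorem stmt_8_general {n : ℕ} (C : Set (EuclideanSpace ℝ (Fin n)))
    (x0 : EuclideanSpace ℝ (Fin n)) (u : EuclideanSpace ℝ (Fin n)) :
    tcone2 C x0 u ⊆
      closure (coneOf ((fun y => y - u) '' coneOf ((fun c => c - x0) '' C))) := by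
  rintro v ⟨t, vk, ht_pos, -, hvk, hmem⟩
  exact mem_closure_of_tendsto hvk
    (Eventually.of_forall fun k => mem_coneOf_of_add_smul_add_sq_smul_mem (ht_pos k) (hmem k))

/-- For a convex set `C` and `u ∈ T(C; x⁰)`:
`T²(C; x⁰, u) ⊆ cl cone(cone(C − x⁰) − u)`. -/
theorem stmt_8 {n : ℕ} (C : Set (EuclideanSpace ℝ (Fin n))) (hC : Convex ℝ C)
    (x0 : EuclideanSpace ℝ (Fin n)) (hx0 : x0 ∈ C)
    (u : EuclideanSpace ℝ (Fin n)) (hu : u ∈ tcone C x0) :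
    tcone2 C x0 u ⊆
      closure (coneOf ((fun y => y - u) '' coneOf ((fun c => c - x0) '' C))) :=
  stmt_8_general C x0 u
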